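/- arXiv:2002.12529 — 2 statements merged into one kernel-verified Lean document; each statement's English description precedes it below -/
import Mathlib

section
/- Let p ∈ [0,1], and let (Z_k) be i.i.d. with P(Z_k = 1) = p = 1 - P(Z_k = -1), X_n = Z_1 + ... + Z_n, R_n = card{X_0, ..., X_n}. Then almost surely lim_{n→∞} R_n/n = lim_{n→∞} |X_n|/n = |2p - 1|. -/
/-!
By the strong law of large numbers `X n / n → 2p - 1` almost surely. The rest is deterministic:
a walk on `ℤ` with steps of size at most one visits every integer between its running minimum and
its running maximum, so `R n = max_{k ≤ n} X k - min_{k ≤ n} X k + 1`. If `X n / n → L`, then the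
running maximum grows like `max L 0 · n` and the running minimum like `min L 0 · n`, so
`R n / n → max L 0 - min L 0 = |L|`.
-/

open Filter MeasureTheory ProbabilityTheory Finset Topology

@[simp, norm_cast]
theorem Int.cast_finsetSup' {ι R : Type*} [Ring R] [LinearOrder R] [IsStrictOrderedRing R]
    {s : Finset ι} (hs : s.Nonempty) (f : ι → ℤ) :
    ((s.sup' hs f : ℤ) : R) = s.sup' hs fun i ↦ (f i : R) :=
  apply_sup'_eq_sup'_comp hs _ fun _ _ ↦ Int.cast_max

theorem Finset.inf'_eq_neg_sup'_neg {ι α : Type*} [AddCommGroup α] [LinearOrder α]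
    [IsOrderedAddMonoid α] {s : Finset ι} (hs : s.Nonempty) (f : ι → α) :
    s.inf' hs f = -s.sup' hs (-f) :=
  le_antisymm (le_neg.2 (sup'_le hs _ fun _ hi ↦ neg_le_neg (inf'_le f hi)))
    (le_inf' hs _ fun _ hi ↦ neg_le.2 (le_sup' (-f) hi))

section Walk

variable {f : ℕ → ℤ}

theorem exists_mem_Icc_eq_of_le_add_one (hf : ∀ k, f (k + 1) ≤ f k + 1) {a b : ℕ} (hab : a ≤ b)
    {c : ℤ} (hac : f a ≤ c) (hcb : c ≤ f b) : ∃ k ∈ Icc a b, f k = c := by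
  induction b, hab using Nat.le_induction with
  | base => exact ⟨a, left_mem_Icc.2 le_rfl, le_antisymm hac hcb⟩
  | succ b hab ih =>
    rcases le_or_gt c (f b) with hcb' | hbc
    · obtain ⟨k, hk, hfk⟩ := ih hcb'
      exact ⟨k, Icc_subset_Icc_right b.le_succ hk, hfk⟩
    · exact ⟨b + 1, right_mem_Icc.2 (hab.trans b.le_succ), le_antisymm (by linarith [hf b]) hcb⟩

theorem image_range_eq_Icc_of_abs_sub_le_one (hf : ∀ k, |f (k + 1) - f k| ≤ 1) (n : ℕ) :
    (range (n + 1)).image f =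
      Icc ((range (n + 1)).inf' nonempty_range_add_one f)
        ((range (n + 1)).sup' nonempty_range_add_one f) := by
  refine Subset.antisymm (fun c hc ↦ ?_) (fun c hc ↦ ?_)
  · obtain ⟨k, hk, rfl⟩ := mem_image.1 hc
    exact mem_Icc.2 ⟨inf'_le f hk, le_sup' f hk⟩
  obtain ⟨hlo, hhi⟩ := mem_Icc.1 hc
  obtain ⟨a, ha, hfa⟩ := exists_mem_eq_inf' nonempty_range_add_one f
  obtain ⟨b, hb, hfb⟩ := exists_mem_eq_sup' nonempty_range_add_one f
  rw [hfa] at hlo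
  rw [hfb] at hhi
  rw [mem_range] at ha hb
  obtain ⟨k, hk, hfk⟩ : ∃ k ∈ Icc (min a b) (max a b), f k = c := by
    rcases le_total a b with hab | hba
    · simpa [hab] using exists_mem_Icc_eq_of_le_add_one
        (fun k ↦ by linarith [(abs_le.1 (hf k)).2]) hab hlo hhi
    · obtain ⟨k, hk, hfk⟩ := exists_mem_Icc_eq_of_le_add_one (f := (-f ·))
        (fun k ↦ by linarith [(abs_le.1 (hf k)).1]) hba (neg_le_neg hhi) (neg_le_neg hlo)
      exact ⟨k, by simpa [hba] using hk, neg_inj.1 hfk⟩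
  exact mem_image.2 ⟨k, mem_range.2 (by grind), hfk⟩

theorem card_image_range_of_abs_sub_le_one (hf : ∀ k, |f (k + 1) - f k| ≤ 1) (n : ℕ) :
    (#((range (n + 1)).image f) : ℤ) =
      (range (n + 1)).sup' nonempty_range_add_one f +
        (range (n + 1)).sup' nonempty_range_add_one (-f) + 1 := by
  have hle : (range (n + 1)).inf' nonempty_range_add_one f ≤
      (range (n + 1)).sup' nonempty_range_add_one f + 1 := by
    have hn := self_mem_range_succ n
    linarith [inf'_le f hn, le_sup' f hn]
  rw [image_range_eq_Icc_of_abs_sub_le_one hf, Int.card_Icc_of_le _ _ hle, inf'_eq_neg_sup'_neg]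
  ring

end Walk

theorem tendsto_sup'_range_div {g : ℕ → ℝ} {L : ℝ}
    (h : Tendsto (fun n : ℕ ↦ g n / n) atTop (𝓝 L)) :
    Tendsto (fun n : ℕ ↦ (range (n + 1)).sup' nonempty_range_add_one g / n) atTop
      (𝓝 (max L 0)) := by
  have hlower : Tendsto (fun n : ℕ ↦ max (g n) (g 0) / n) atTop (𝓝 (max L 0)) :=
    (h.max (tendsto_const_div_atTop_nhds_zero_nat (g 0))).congr fun n ↦
      max_div_div_right n.cast_nonneg _ _
  have hle (n : ℕ) :
      max (g n) (g 0) / n ≤ (range (n + 1)).sup' nonempty_range_add_one g / n := by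
    gcongr
    exact max_le (le_sup' g (self_mem_range_succ n)) (le_sup' g (by simp))
  refine tendsto_order.2 ⟨fun a ha ↦ (hlower.eventually (lt_mem_nhds ha)).mono
    fun n hn ↦ hn.trans_le (hle n), fun a ha ↦ ?_⟩
  obtain ⟨b, hLb, hba⟩ := exists_between ha
  have hb : 0 < b := (le_max_right L 0).trans_lt hLb
  obtain ⟨N, hN⟩ := eventually_atTop.1 <|
    (h.eventually (gt_mem_nhds ((le_max_left L 0).trans_lt hLb))).and (eventually_gt_atTop 0)
  have hearly : ∀ᶠ n : ℕ in atTop, (range (N + 1)).sup' nonempty_range_add_one g < b * n :=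
    (tendsto_natCast_atTop_atTop.const_mul_atTop hb).eventually_gt_atTop _
  filter_upwards [hearly, eventually_gt_atTop 0] with n hNn hn
  have hsup : (range (n + 1)).sup' nonempty_range_add_one g ≤ b * n := by
    refine sup'_le _ _ fun k hk ↦ ?_
    rcases le_or_gt k N with hkN | hNk
    · exact (le_sup' g (mem_range_succ_iff.2 hkN)).trans hNn.le
    · obtain ⟨hgk, hk0⟩ := hN k hNk.le
      calc g k ≤ b * k := ((div_lt_iff₀ (by exact_mod_cast hk0)).1 hgk).le
        _ ≤ b * n := by gcongr; exact mem_range_succ_iff.1 hk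
  exact ((div_le_iff₀ (by exact_mod_cast hn)).2 hsup).trans_lt hba

theorem tendsto_card_image_range_div_of_abs_sub_le_one {f : ℕ → ℤ}
    (hf : ∀ k, |f (k + 1) - f k| ≤ 1) {L : ℝ}
    (h : Tendsto (fun n : ℕ ↦ (f n : ℝ) / n) atTop (𝓝 L)) :
    Tendsto (fun n : ℕ ↦ (#((range (n + 1)).image f) : ℝ) / n) atTop (𝓝 |L|) := by
  have hmax := tendsto_sup'_range_div h
  have hmin := tendsto_sup'_range_div (g := fun k ↦ ((-f) k : ℝ)) (L := -L) <| by
    simpa [neg_div] using h.neg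
  have hlim := (hmax.add hmin).add (tendsto_one_div_atTop_nhds_zero_nat (𝕜 := ℝ))
  rw [max_zero_add_max_neg_zero_eq_abs_self, add_zero] at hlim
  refine hlim.congr fun n ↦ ?_
  have hcard : (#((range (n + 1)).image f) : ℝ) =
      (range (n + 1)).sup' nonempty_range_add_one (fun k ↦ (f k : ℝ)) +
        (range (n + 1)).sup' nonempty_range_add_one (fun k ↦ ((-f) k : ℝ)) + 1 := by
    exact_mod_cast card_image_range_of_abs_sub_le_one hf n
  rw [hcard]
  ring

section PlusMinusOne

variable {Ω : Type*} [MeasurableSpace Ω] {μ : Measure Ω}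

theorem identDistrib_of_measure_preimage_singleton {α : Type*} [MeasurableSpace α]
    [MeasurableSingletonClass α] [Countable α] {Y Y' : Ω → α} (hY : Measurable Y)
    (hY' : Measurable Y') (h : ∀ a, μ (Y ⁻¹' {a}) = μ (Y' ⁻¹' {a})) : IdentDistrib Y Y' μ μ :=
  ⟨hY.aemeasurable, hY'.aemeasurable, Measure.ext_of_singleton fun a ↦ by
    rw [Measure.map_apply hY (measurableSet_singleton a),
      Measure.map_apply hY' (measurableSet_singleton a), h]⟩

theorem identDistrib_of_eq_one_or_eq_neg_one {Y Y' : Ω → ℤ} (hY : Measurable Y)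
    (hY' : Measurable Y') (hval : ∀ ω, Y ω = 1 ∨ Y ω = -1) (hval' : ∀ ω, Y' ω = 1 ∨ Y' ω = -1)
    (h1 : μ {ω | Y ω = 1} = μ {ω | Y' ω = 1}) (hm1 : μ {ω | Y ω = -1} = μ {ω | Y' ω = -1}) :
    IdentDistrib Y Y' μ μ := by
  refine identDistrib_of_measure_preimage_singleton hY hY' fun a ↦ ?_
  by_cases ha : a = 1 ∨ a = -1
  · rcases ha with rfl | rfl
    exacts [h1, hm1]
  have hempty {Y : Ω → ℤ} (hval : ∀ ω, Y ω = 1 ∨ Y ω = -1) : Y ⁻¹' {a} = ∅ :=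
    Set.eq_empty_of_forall_notMem fun ω hω ↦ ha (hω ▸ hval ω)
  rw [hempty hval, hempty hval']

theorem integral_intCast_of_eq_one_or_eq_neg_one [IsFiniteMeasure μ] {Y : Ω → ℤ}
    (hY : Measurable Y) (hval : ∀ ω, Y ω = 1 ∨ Y ω = -1) :
    ∫ ω, (Y ω : ℝ) ∂μ = μ.real {ω | Y ω = 1} - μ.real {ω | Y ω = -1} := by
  have hpos : MeasurableSet {ω | Y ω = 1} := hY (measurableSet_singleton 1)
  have hneg : MeasurableSet {ω | Y ω = -1} := hY (measurableSet_singleton (-1))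
  have hY_eq : (fun ω ↦ (Y ω : ℝ)) =
      fun ω ↦ {ω | Y ω = 1}.indicator 1 ω - {ω | Y ω = -1}.indicator (1 : Ω → ℝ) ω := by
    ext ω
    rcases hval ω with h | h <;> simp [h]
  rw [hY_eq, integral_sub ((integrable_const 1).indicator hpos)
    ((integrable_const 1).indicator hneg), integral_indicator_one hpos, integral_indicator_one hneg]

theorem ae_tendsto_sum_div_of_eq_one_or_eq_neg_one [IsProbabilityMeasure μ] {Y : ℕ → Ω → ℤ}
    (hY : ∀ k, Measurable (Y k)) (hindep : Pairwise fun i j ↦ Y i ⟂ᵢ[μ] Y j)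
    (hval : ∀ k ω, Y k ω = 1 ∨ Y k ω = -1) {p : ℝ} (hp1 : ∀ k, μ.real {ω | Y k ω = 1} = p)
    (hpm1 : ∀ k, μ.real {ω | Y k ω = -1} = 1 - p) :
    ∀ᵐ ω ∂μ, Tendsto (fun n : ℕ ↦ (∑ k ∈ range n, (Y k ω : ℝ)) / n) atTop (𝓝 (2 * p - 1)) := by
  have hcast : Measurable (fun x : ℤ ↦ (x : ℝ)) := measurable_from_top
  have hident (k : ℕ) : IdentDistrib (Y k) (Y 0) μ μ :=
    identDistrib_of_eq_one_or_eq_neg_one (hY k) (hY 0) (hval k) (hval 0)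
      ((measureReal_eq_measureReal_iff ..).1 ((hp1 k).trans (hp1 0).symm))
      ((measureReal_eq_measureReal_iff ..).1 ((hpm1 k).trans (hpm1 0).symm))
  have hint : Integrable (fun ω ↦ (Y 0 ω : ℝ)) μ :=
    (integrable_const 1).mono' (hcast.comp (hY 0)).aestronglyMeasurable
      (ae_of_all _ fun ω ↦ by rcases hval 0 ω with h | h <;> simp [h])
  have hmean : ∫ ω, (Y 0 ω : ℝ) ∂μ = 2 * p - 1 := by
    rw [integral_intCast_of_eq_one_or_eq_neg_one (hY 0) (hval 0), hp1, hpm1]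
    ring
  have hslln := strong_law_ae (fun k ω ↦ (Y k ω : ℝ)) hint
    (fun i j hij ↦ (hindep hij).comp hcast hcast) fun k ↦ (hident k).comp hcast
  filter_upwards [hslln] with ω hω
  rw [hmean] at hω
  simpa [div_eq_inv_mul] using hω

end PlusMinusOne

theorem stmt18_general {Ω : Type*} [MeasurableSpace Ω] (μ : Measure Ω) [IsProbabilityMeasure μ]
    (p : ℝ)
    (Z : ℕ → Ω → ℤ) (hZmeas : ∀ k, Measurable (Z k))
    (hindep : iIndepFun Z μ)
    (hval : ∀ k ω, Z k ω = 1 ∨ Z k ω = -1)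
    (hp1 : ∀ k, (μ {ω | Z k ω = 1}).toReal = p)
    (hpm1 : ∀ k, (μ {ω | Z k ω = -1}).toReal = 1 - p)
    (X : ℕ → Ω → ℤ) (hX : ∀ n ω, X n ω = ∑ k ∈ Finset.range n, Z (k + 1) ω)
    (R : ℕ → Ω → ℕ)
    (hR : ∀ n ω, R n ω = ((Finset.range (n + 1)).image (fun k => X k ω)).card) :
    ∀ᵐ ω ∂μ,
      Tendsto (fun n : ℕ => (R n ω : ℝ) / n) atTop (nhds |2 * p - 1|) ∧
      Tendsto (fun n : ℕ => ((|X n ω| : ℤ) : ℝ) / n) atTop (nhds |2 * p - 1|) := by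
  have hslln := ae_tendsto_sum_div_of_eq_one_or_eq_neg_one (fun k ↦ hZmeas (k + 1))
    (fun i j hij ↦ hindep.indepFun (by simpa using hij)) (fun k ↦ hval (k + 1))
    (fun k ↦ hp1 (k + 1)) (fun k ↦ hpm1 (k + 1))
  filter_upwards [hslln] with ω hω
  have hspeed : Tendsto (fun n : ℕ ↦ (X n ω : ℝ) / n) atTop (𝓝 (2 * p - 1)) := by
    simpa [hX] using hω
  have hstep (k : ℕ) : |X (k + 1) ω - X k ω| ≤ 1 := by
    rw [hX, hX, sum_range_succ, add_sub_cancel_left]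
    rcases hval (k + 1) ω with h | h <;> simp [h]
  refine ⟨?_, ?_⟩
  · simpa only [hR] using tendsto_card_image_range_div_of_abs_sub_le_one hstep hspeed
  · simpa [abs_div] using hspeed.abs

theorem stmt18 {Ω : Type*} [MeasurableSpace Ω] (μ : Measure Ω) [IsProbabilityMeasure μ]
    (p : ℝ) (hp : p ∈ Set.Icc (0 : ℝ) 1)
    (Z : ℕ → Ω → ℤ) (hZmeas : ∀ k, Measurable (Z k))
    (hindep : iIndepFun Z μ)
    (hval : ∀ k ω, Z k ω = 1 ∨ Z k ω = -1)
    (hp1 : ∀ k, (μ {ω | Z k ω = 1}).toReal = p)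
    (hpm1 : ∀ k, (μ {ω | Z k ω = -1}).toReal = 1 - p)
    (X : ℕ → Ω → ℤ) (hX : ∀ n ω, X n ω = ∑ k ∈ Finset.range n, Z (k + 1) ω)
    (R : ℕ → Ω → ℕ)
    (hR : ∀ n ω, R n ω = ((Finset.range (n + 1)).image (fun k => X k ω)).card) :
    ∀ᵐ ω ∂μ,
      Tendsto (fun n : ℕ => (R n ω : ℝ) / n) atTop (nhds |2 * p - 1|) ∧
      Tendsto (fun n : ℕ => ((|X n ω| : ℤ) : ℝ) / n) atTop (nhds |2 * p - 1|) :=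
  stmt18_general μ p Z hZmeas hindep hval hp1 hpm1 X hX R hR
end

section
/- Let (x_n) be an integer sequence with |x_{n+1} - x_n| ≤ 1 hitting 0 at infinitely many times τ_0 < τ_1 < ... . If limsup_{n→∞} |x_n|/n > 0, then τ_k/τ_{k-1} does not converge to 1. -/
/-!
Between consecutive zeros `τ k ≤ n < τ (k + 1)` the walk has moved at most `n - τ k` away from
`0`, so `|x n| / n ≤ (n - τ k) / τ k ≤ τ (k + 1) / τ k - 1`. If the ratios of consecutive zeros
tended to `1`, these block bounds would force `|x n| / n → 0`, i.e. a vanishing limsup.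
-/

open Filter Topology

theorem abs_sub_le_of_abs_succ_sub_le_one {x : ℕ → ℤ} (hinc : ∀ n, |x (n + 1) - x n| ≤ 1)
    {a b : ℕ} (hab : a ≤ b) : |x b - x a| ≤ b - a := by
  induction b, hab using Nat.le_induction with
  | base => simp
  | succ b _ ih =>
    calc |x (b + 1) - x a| ≤ |x (b + 1) - x b| + |x b - x a| := abs_sub_le _ _ _
      _ ≤ 1 + (b - a) := add_le_add (hinc b) ih
      _ = ((b + 1 : ℕ) : ℤ) - a := by push_cast; ring

theorem StrictMono.exists_le_lt_succ {τ : ℕ → ℕ} (hτ : StrictMono τ) {n : ℕ} (hn : τ 0 ≤ n) :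
    ∃ k, τ k ≤ n ∧ n < τ (k + 1) := by
  have h : ∃ m, n < τ m := ⟨n + 1, (Nat.lt_succ_self n).trans_le hτ.le_apply⟩
  have hm : Nat.find h ≠ 0 := fun h0 => by
    have := Nat.find_spec h
    rw [h0] at this
    omega
  obtain ⟨k, hk⟩ := Nat.exists_eq_succ_of_ne_zero hm
  exact ⟨k, not_lt.1 (Nat.find_min h (by omega)), by simpa [hk] using Nat.find_spec h⟩

theorem tendsto_zero_of_le_on_blocks {a b : ℕ → ℝ} {τ : ℕ → ℕ} (hτ : StrictMono τ)
    (ha : ∀ n, 0 ≤ a n) (hb : Tendsto b atTop (𝓝 0))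
    (hab : ∀ᶠ k in atTop, ∀ n, τ k ≤ n → n < τ (k + 1) → a n ≤ b k) :
    Tendsto a atTop (𝓝 0) := by
  refine tendsto_order.2
    ⟨fun ε hε => Eventually.of_forall fun n => hε.trans_le (ha n), fun ε hε => ?_⟩
  obtain ⟨K, hK⟩ := eventually_atTop.1 (hab.and (hb.eventually (gt_mem_nhds hε)))
  filter_upwards [eventually_ge_atTop (τ K)] with n hn
  obtain ⟨k, hkn, hnk⟩ := hτ.exists_le_lt_succ ((hτ.monotone K.zero_le).trans hn)
  have hKk : K ≤ k := Nat.lt_succ_iff.1 (hτ.lt_iff_lt.1 (hn.trans_lt hnk))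
  exact ((hK k hKk).1 n hkn hnk).trans_lt (hK k hKk).2

theorem abs_div_le_div_sub_one_of_eq_zero {x : ℕ → ℤ} (hinc : ∀ n, |x (n + 1) - x n| ≤ 1)
    {s t n : ℕ} (hs : x s = 0) (hs0 : 0 < s) (hsn : s ≤ n) (hnt : n < t) :
    ((|x n| : ℤ) : ℝ) / n ≤ (t : ℝ) / s - 1 := by
  have hxn : ((|x n| : ℤ) : ℝ) ≤ n - s := by
    have := abs_sub_le_of_abs_succ_sub_le_one hinc hsn
    rw [hs, sub_zero] at this
    exact_mod_cast this
  have hs0' : (0 : ℝ) < s := by exact_mod_cast hs0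
  have hsn' : (s : ℝ) ≤ n := by exact_mod_cast hsn
  have hnt' : (n : ℝ) ≤ t := by exact_mod_cast hnt.le
  calc ((|x n| : ℤ) : ℝ) / n ≤ (t - s) / s :=
        div_le_div₀ (by linarith) (by linarith) hs0' hsn'
    _ = (t : ℝ) / s - 1 := by rw [sub_div, div_self hs0'.ne']

theorem stmt19_general (x : ℕ → ℤ)
    (hinc : ∀ n, |x (n + 1) - x n| ≤ 1)
    (τ : ℕ → ℕ) (hmono : StrictMono τ)
    (hzero : ∀ k, x (τ k) = 0)
    (hpos : 0 < limsup (fun n : ℕ => ((|x n| : ℤ) : ℝ) / n) atTop) :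
    ¬ Tendsto (fun k : ℕ => (τ (k + 1) : ℝ) / (τ k : ℝ)) atTop (nhds 1) := by
  intro h
  have hgap : Tendsto (fun k => (τ (k + 1) : ℝ) / τ k - 1) atTop (𝓝 0) := by
    simpa using h.sub_const 1
  have hlim : Tendsto (fun n : ℕ => ((|x n| : ℤ) : ℝ) / n) atTop (𝓝 0) :=
    tendsto_zero_of_le_on_blocks hmono (fun n => by positivity) hgap <| by
      filter_upwards [eventually_ge_atTop 1] with k hk n hkn hnk
      exact abs_div_le_div_sub_one_of_eq_zero hinc (hzero k) (hk.trans hmono.le_apply) hkn hnk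
  exact hpos.ne' hlim.limsup_eq

theorem stmt19 (x : ℕ → ℤ)
    (hinc : ∀ n, |x (n + 1) - x n| ≤ 1)
    (τ : ℕ → ℕ) (hmono : StrictMono τ)
    (hzero : ∀ k, x (τ k) = 0)
    (hall : ∀ n, x n = 0 → ∃ k, τ k = n)
    (hpos : 0 < limsup (fun n : ℕ => ((|x n| : ℤ) : ℝ) / n) atTop) :
    ¬ Tendsto (fun k : ℕ => (τ (k + 1) : ℝ) / (τ k : ℝ)) atTop (nhds 1) :=
  stmt19_general x hinc τ hmono hzero hpos
end
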